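/- arXiv:1610.09170 — 10 statements merged into one kernel-verified Lean document; each statement's English description precedes it below -/
import Mathlib

section
/- Let f : ℝ → ℝ be continuous with f(x+1) = f(x) for all x, let ε ≠ 0, and consider the lifted cylinder map T_ε(x,p) = (x + p, p + ε·f(x + p)). If there exists a continuous function Γ : ℝ → ℝ with Γ(x+1) = Γ(x) for all x whose graph is invariant under T_ε, i.e. Γ(x + Γ(x)) = Γ(x) + ε·f(x + Γ(x)) for all x ∈ ℝ, then ∫₀¹ f(x) dx = 0. -/
/-!
`T_ε` maps the point `(x, Γ x)` of the invariant graph to `(g x, Γ (g x))`, where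
`g x = x + Γ x`. If `g a = g b`, the invariance equation gives `Γ a = Γ b`, hence `a = b`; so `g`
is an increasing homeomorphism of `ℝ` commuting with `x ↦ x + 1`. Evaluated at `g⁻¹ y`,
the invariance equation reads `ε f y = (g y - y) - (y - g⁻¹ y)`. Integrating over a period, the
mean displacements of `g` and `g⁻¹` cancel: by the area formula
`∫ₐᵇ g + ∫_{g a}^{g b} g⁻¹ = b g(b) - a g(a)` applied on `[g⁻¹ 0, g⁻¹ 0 + 1]`, together with
the periodicity of `g - id`, one gets `∫₀¹ g + ∫₀¹ g⁻¹ = 1`.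
-/

open MeasureTheory Set Function

lemma volume_regionBetween_Ioo_eq_intervalIntegral {u v : ℝ → ℝ} (hu : Continuous u)
    (hv : Continuous v) {a b : ℝ} (hab : a ≤ b) (huv : ∀ x ∈ Ioo a b, u x ≤ v x) :
    volume (regionBetween u v (Ioo a b)) = ENNReal.ofReal (∫ x in a..b, v x - u x) := by
  rw [Measure.volume_eq_prod, volume_regionBetween_eq_integral
    (hu.integrableOn_Icc.mono_set Ioo_subset_Icc_self)
    (hv.integrableOn_Icc.mono_set Ioo_subset_Icc_self) measurableSet_Ioo huv,
    ← integral_Ioc_eq_integral_Ioo, ← intervalIntegral.integral_of_le hab]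
  rfl

lemma intervalIntegral_add_one_of_map_add_one {g : ℝ → ℝ} (hg : Continuous g)
    (hg1 : ∀ x, g (x + 1) = g x + 1) (a : ℝ) :
    ∫ x in a..a + 1, g x = (∫ x in (0 : ℝ)..1, g x) + a := by
  have hper : Periodic (fun x => g x - x) 1 := fun x => by simp only [hg1]; ring
  have h := hper.intervalIntegral_add_eq a 0
  rw [zero_add,
    intervalIntegral.integral_sub (hg.intervalIntegrable _ _)
      intervalIntegral.intervalIntegrable_id,
    intervalIntegral.integral_sub (hg.intervalIntegrable _ _)
      intervalIntegral.intervalIntegrable_id,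
    integral_id, integral_id] at h
  linarith

lemma strictMono_of_continuous_of_injective_of_map_add_one {g : ℝ → ℝ} (hg : Continuous g)
    (hinj : Injective g) (hg1 : ∀ x, g (x + 1) = g x + 1) : StrictMono g := by
  refine (hg.strictMono_of_inj hinj).resolve_right fun hanti => ?_
  have := hanti (zero_lt_one' ℝ)
  rw [← zero_add (1 : ℝ), hg1] at this
  linarith

lemma exists_orderIso_of_continuous_of_injective_of_map_add_one {g : ℝ → ℝ}
    (hg : Continuous g) (hinj : Injective g) (hg1 : ∀ x, g (x + 1) = g x + 1) :
    ∃ e : ℝ ≃o ℝ, ⇑e = g := by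
  have hmono := strictMono_of_continuous_of_injective_of_map_add_one hg hinj hg1
  let G : CircleDeg1Lift := ⟨⟨g, hmono.monotone⟩, hg1⟩
  exact ⟨hmono.orderIsoOfSurjective g (G.continuous_iff_surjective.1 hg), rfl⟩

namespace OrderIso

variable (e : ℝ ≃o ℝ)

lemma preimage_swap_regionBetween_symm (a b : ℝ) :
    Prod.swap ⁻¹' regionBetween e.symm (fun _ => b) (Ioo (e a) (e b)) =
      regionBetween (fun _ => e a) e (Ioo a b) := by
  ext ⟨x, y⟩
  simp only [regionBetween, mem_preimage, Prod.swap_prod_mk, mem_ofPred_eq, mem_Ioo,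
    e.symm_apply_lt]
  constructor
  · rintro ⟨⟨hay, -⟩, hyx, hxb⟩
    exact ⟨⟨e.lt_iff_lt.1 (hay.trans hyx), hxb⟩, hay, hyx⟩
  · rintro ⟨⟨-, hxb⟩, hay, hyx⟩
    exact ⟨⟨hay, hyx.trans (e.lt_iff_lt.2 hxb)⟩, hyx, hxb⟩

lemma integral_add_integral_symm_of_le {a b : ℝ} (hab : a ≤ b) :
    (∫ x in a..b, e x) + ∫ y in e a..e b, e.symm y = b * e b - a * e a := by
  have hea : e a ≤ e b := e.monotone hab
  have hvol : volume (regionBetween (fun _ => e a) e (Ioo a b)) =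
      volume (regionBetween e.symm (fun _ => b) (Ioo (e a) (e b))) := by
    rw [← e.preimage_swap_regionBetween_symm]
    exact Measure.measurePreserving_swap.measure_preimage
      (measurableSet_regionBetween e.symm.continuous.measurable measurable_const
        measurableSet_Ioo).nullMeasurableSet
  rw [volume_regionBetween_Ioo_eq_intervalIntegral continuous_const e.continuous hab
      fun x hx => e.monotone hx.1.le,
    volume_regionBetween_Ioo_eq_intervalIntegral e.symm.continuous continuous_const hea
      fun y hy => e.symm_apply_le.2 hy.2.le,
    ENNReal.ofReal_eq_ofReal_iff
      (intervalIntegral.integral_nonneg hab fun x hx => sub_nonneg.2 (e.monotone hx.1))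
      (intervalIntegral.integral_nonneg hea fun y hy => sub_nonneg.2 (e.symm_apply_le.2 hy.2)),
    intervalIntegral.integral_sub (e.continuous.intervalIntegrable _ _) intervalIntegrable_const,
    intervalIntegral.integral_sub intervalIntegrable_const
      (e.symm.continuous.intervalIntegrable _ _)] at hvol
  simp only [intervalIntegral.integral_const, smul_eq_mul] at hvol
  linarith

lemma integral_add_integral_symm (a b : ℝ) :
    (∫ x in a..b, e x) + ∫ y in e a..e b, e.symm y = b * e b - a * e a := by
  rcases le_total a b with hab | hba
  · exact e.integral_add_integral_symm_of_le hab
  · rw [intervalIntegral.integral_symm, intervalIntegral.integral_symm (e b)]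
    linarith [e.integral_add_integral_symm_of_le hba]

lemma integral_add_integral_symm_of_map_add_one (he : ∀ x, e (x + 1) = e x + 1) :
    (∫ x in (0 : ℝ)..1, e x) + ∫ x in (0 : ℝ)..1, e.symm x = 1 := by
  set c := e.symm 0
  have hc : e c = 0 := e.apply_symm_apply 0
  have hc1 : e (c + 1) = 1 := by rw [he, hc, zero_add]
  have h := e.integral_add_integral_symm c (c + 1)
  rw [hc, hc1, intervalIntegral_add_one_of_map_add_one e.continuous he] at h
  linarith

end OrderIso

theorem stmt0_general (f : ℝ → ℝ)
    (ε : ℝ) (hε : ε ≠ 0)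
    (Γ : ℝ → ℝ) (hΓc : Continuous Γ) (hΓper : ∀ x, Γ (x + 1) = Γ x)
    (hinv : ∀ x : ℝ, Γ (x + Γ x) = Γ x + ε * f (x + Γ x)) :
    ∫ x in (0:ℝ)..1, f x = 0 := by
  have hinj : Injective fun x => x + Γ x := by
    intro a b (hab : a + Γ a = b + Γ b)
    have hΓ := hinv a
    rw [hab, hinv b] at hΓ
    linarith
  obtain ⟨e, he⟩ := exists_orderIso_of_continuous_of_injective_of_map_add_one
    (g := fun x => x + Γ x) (by fun_prop) hinj fun x => by simp only [hΓper]; ring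
  have he1 : ∀ x, e (x + 1) = e x + 1 := fun x => by simp only [he, hΓper]; ring
  have hdisp : ∀ y, ε * f y = e y + e.symm y - 2 * y := fun y => by
    have hy : e.symm y + Γ (e.symm y) = y := by rw [← congrFun he, e.apply_symm_apply]
    have := hinv (e.symm y)
    rw [hy] at this
    rw [he]
    linarith
  have hmean : ε * ∫ x in (0:ℝ)..1, f x = 0 := by
    rw [← intervalIntegral.integral_const_mul, intervalIntegral.integral_congr fun y _ => hdisp y,
      intervalIntegral.integral_sub (f := fun y => e y + e.symm y)
        ((e.continuous.add e.symm.continuous).intervalIntegrable _ _)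
        (g := fun y => 2 * y) ((continuous_const.mul continuous_id).intervalIntegrable _ _),
      intervalIntegral.integral_add (e.continuous.intervalIntegrable _ _)
        (e.symm.continuous.intervalIntegrable _ _),
      e.integral_add_integral_symm_of_map_add_one he1, intervalIntegral.integral_const_mul,
      integral_id]
    norm_num
  exact (mul_eq_zero.1 hmean).resolve_left hε

/-- If the lifted cylinder map `T_ε(x,p) = (x+p, p + ε f(x+p))` (with `f`
continuous and 1-periodic, `ε ≠ 0`) has a rotational invariant circle given by the graph of
a continuous 1-periodic function `Γ`, then `∫₀¹ f = 0`. -/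
theorem stmt0 (f : ℝ → ℝ) (hf : Continuous f) (hfper : ∀ x, f (x + 1) = f x)
    (ε : ℝ) (hε : ε ≠ 0)
    (Γ : ℝ → ℝ) (hΓc : Continuous Γ) (hΓper : ∀ x, Γ (x + 1) = Γ x)
    (hinv : ∀ x : ℝ, Γ (x + Γ x) = Γ x + ε * f (x + Γ x)) :
    ∫ x in (0:ℝ)..1, f x = 0 :=
  stmt0_general f ε hε Γ hΓc hΓper hinv
end

section
/- Let f : ℝ → ℝ and ε ∈ ℝ. Suppose γ : ℝ → ℝ is continuous, strictly increasing, satisfies γ(u+1) = γ(u) + 1 for all u, and the conjugacy equation γ(γ(u)) = 2γ(u) − u + ε·f(γ(u)) for all u ∈ ℝ. Then the function v ↦ 2v + ε·f(v) is strictly monotone increasing on ℝ; in particular, at every point v where f is differentiable, 2 + ε·f′(v) ≥ 0. -/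
/-! Rewriting the invariance equation as `2 γ(u) + ε f(γ(u)) = γ(γ(u)) + u` exhibits
`v ↦ 2v + εf(v)`, read through the parametrisation `v = γ(u)`, as a sum of two strictly
increasing functions of `u`. A continuous degree-one lift of the circle is surjective, so every
`v` is of this form; the derivative bound follows since monotone functions have nonnegative
derivative. -/

theorem StrictMono.of_comp_eq_comp_add {α : Type*} [LinearOrder α] [AddCommMonoid α]
    [IsOrderedCancelAddMonoid α] {γ g : α → α} (hγ : StrictMono γ)
    (hγsurj : Function.Surjective γ) (hg : ∀ u, g (γ u) = γ (γ u) + u) : StrictMono g := by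
  intro v₁ v₂ hv
  obtain ⟨u₁, rfl⟩ := hγsurj v₁
  obtain ⟨u₂, rfl⟩ := hγsurj v₂
  have hu : u₁ < u₂ := hγ.lt_iff_lt.mp hv
  rw [hg, hg]
  exact add_lt_add (hγ (hγ hu)) hu

theorem Function.Surjective.of_continuous_of_map_add_one {γ : ℝ → ℝ} (hc : Continuous γ)
    (hmono : Monotone γ) (hper : ∀ u, γ (u + 1) = γ u + 1) : Function.Surjective γ :=
  (CircleDeg1Lift.continuous_iff_surjective ⟨⟨γ, hmono⟩, hper⟩).mp hc

/-- If `γ` is a continuous, strictly increasing conjugacy with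
`γ(u+1) = γ(u) + 1` and `γ(γ(u)) = 2γ(u) − u + ε f(γ(u))` for all `u`, then the function
`v ↦ 2v + ε f(v)` is strictly monotone increasing; in particular, at every point where `f`
is differentiable, `2 + ε f′(v) ≥ 0`. -/
theorem stmt1 (f : ℝ → ℝ) (ε : ℝ) (γ : ℝ → ℝ)
    (hγc : Continuous γ) (hγmono : StrictMono γ)
    (hγper : ∀ u, γ (u + 1) = γ u + 1)
    (hconj : ∀ u : ℝ, γ (γ u) = 2 * γ u - u + ε * f (γ u)) :
    StrictMono (fun v : ℝ => 2 * v + ε * f v) ∧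
      ∀ v : ℝ, DifferentiableAt ℝ f v → 0 ≤ 2 + ε * deriv f v := by
  have hsm : StrictMono (fun v : ℝ => 2 * v + ε * f v) :=
    hγmono.of_comp_eq_comp_add (.of_continuous_of_map_add_one hγc hγmono.monotone hγper)
      fun u => by rw [hconj u]; ring
  refine ⟨hsm, fun v hf => ?_⟩
  have hderiv := ((hasDerivAt_id' v).const_mul 2).add (hf.hasDerivAt.const_mul ε)
  rw [mul_one] at hderiv
  exact hderiv.deriv ▸ hsm.monotone.deriv_nonneg
end

section
/- For every real k > 2, there is no continuous, strictly increasing function γ : ℝ → ℝ with γ(u+1) = γ(u) + 1 for all u that satisfies γ(γ(u)) = 2γ(u) − u − (k/(2π))·sin(2π·γ(u)) for all u ∈ ℝ. (Hence the Taylor–Chirikov standard map with parameter k > 2 has no rotational invariant circle carrying order-preserving dynamics; the critical parameter satisfies k_c ≤ 2.) -/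
/-!
Put `v = γ u`. Since `γ` is a continuous lift of a degree-one circle map it is onto, so the
equation says `γ v + γ⁻¹ v = 2v − (k/2π) sin(2πv)` for every `v`. The left side is strictly
increasing, while the right side has derivative `2 − k < 0` at `v = 0`.
-/

open Real

theorem StrictMono.strictMono_of_comp_self_add {α : Type*} [AddCommMonoid α] [LinearOrder α]
    [IsOrderedCancelAddMonoid α] {γ F : α → α} (hγ : StrictMono γ)
    (hsurj : Function.Surjective γ) (hF : ∀ u, γ (γ u) + u = F (γ u)) : StrictMono F := by
  intro a b hab
  obtain ⟨ua, rfl⟩ := hsurj a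
  obtain ⟨ub, rfl⟩ := hsurj b
  have hu : ua < ub := hγ.lt_iff_lt.1 hab
  rw [← hF, ← hF]
  exact add_lt_add (hγ hab) hu

theorem hasDerivAt_two_mul_sub_sin (k v : ℝ) :
    HasDerivAt (fun v => 2 * v - k / (2 * π) * sin (2 * π * v))
      (2 - k * cos (2 * π * v)) v := by
  have hsin : HasDerivAt (fun v => sin (2 * π * v)) (cos (2 * π * v) * (2 * π)) v := by
    simpa using ((hasDerivAt_id v).const_mul (2 * π)).sin
  have h := ((hasDerivAt_id' v).const_mul 2).sub (hsin.const_mul (k / (2 * π)))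
  rwa [show 2 * 1 - k / (2 * π) * (cos (2 * π * v) * (2 * π)) = 2 - k * cos (2 * π * v) by
    field_simp] at h

/-- For every `k > 2`, the standard map (in delay coordinates) has no
rotational invariant circle carrying order-preserving dynamics: there is no continuous,
strictly increasing `γ : ℝ → ℝ` with `γ(u+1) = γ(u) + 1` satisfying
`γ(γ(u)) = 2γ(u) − u − (k/(2π)) sin(2π γ(u))` for all `u`. -/
theorem stmt2 (k : ℝ) (hk : 2 < k) :
    ¬ ∃ γ : ℝ → ℝ, Continuous γ ∧ StrictMono γ ∧ (∀ u, γ (u + 1) = γ u + 1) ∧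
      (∀ u : ℝ, γ (γ u) =
        2 * γ u - u - (k / (2 * Real.pi)) * Real.sin (2 * Real.pi * γ u)) := by
  rintro ⟨γ, hc, hm, hper, heq⟩
  have hsurj : Function.Surjective γ :=
    (CircleDeg1Lift.continuous_iff_surjective ⟨⟨γ, hm.monotone⟩, hper⟩).1 hc
  have hF : StrictMono fun v => 2 * v - k / (2 * π) * sin (2 * π * v) :=
    hm.strictMono_of_comp_self_add hsurj fun u => by rw [heq]; ring
  have hslope := (hasDerivAt_two_mul_sub_sin k 0).nonneg_of_monotone hF.monotone
  rw [mul_zero, cos_zero, mul_one] at hslope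
  linarith
end

section
/- Let M ≥ 2 be real and set ℓ₋ = (M − √(M² − 4))/2 and ℓ₊ = (M + √(M² − 4))/2. Suppose (β_j)_{j∈ℤ} and (ℓ_j)_{j∈ℤ} are real sequences with ℓ_j > 0 for all j, ℓ_{j+1} = β_j − 1/ℓ_j for all j, and β_j ≤ M for all j. Then ℓ₋ ≤ ℓ_j ≤ ℓ₊ for every j ∈ ℤ. -/
private lemma pow_unb (x y : ℝ) (hy : 1 < y) : ∃ n : ℕ, x < y ^ n :=
  pow_unbounded_of_one_lt x hy

/-- forward deficit growth: lower bound aux -/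
private lemma lower_aux (l L : ℝ) (hl : 0 < l) (hlL : l * L = 1) (hl1 : l ≤ 1)
    (b : ℕ → ℝ) (hpos : ∀ n, 0 < b n)
    (hrec : ∀ n, b (n + 1) ≤ (l + L) - 1 / b n)
    (δ : ℝ) (hδ : 0 < δ) (h0 : b 0 ≤ l - δ) : False := by
  have hld : 0 < l - δ := lt_of_lt_of_le (hpos 0) h0
  set c : ℝ := 1 / (l * (l - δ)) with hc
  have hll : 0 < l * (l - δ) := mul_pos hl hld
  have hcpos : 0 < c := by positivity
  have hcc : c * (l * (l - δ)) = 1 := by rw [hc]; field_simp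
  have hc1 : 1 < c := by rw [hc, lt_div_iff₀ hll]; nlinarith
  have key : ∀ n, b n ≤ l - δ * c ^ n := by
    intro n
    induction n with
    | zero => simpa using h0
    | succ n ih =>
      have hcn : (1:ℝ) ≤ c ^ n := one_le_pow₀ (le_of_lt hc1)
      have hd : δ ≤ δ * c ^ n := by nlinarith
      have hbn := hpos n
      have hdl : δ * c ^ n < l := by nlinarith
      have hpos2 : 0 < l - δ * c ^ n := by linarith
      have h1 : 1 / (l - δ * c ^ n) ≤ 1 / b n :=
        one_div_le_one_div_of_le hbn ih
      have h3 : L + (δ * c ^ n) * c ≤ 1 / (l - δ * c ^ n) := by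
        rw [le_div_iff₀ hpos2]
        nlinarith [mul_nonneg (mul_nonneg hcpos.le hl.le)
          (sub_nonneg.2 hd), mul_pos hδ (pow_pos hcpos n)]
      calc b (n+1) ≤ (l + L) - 1 / b n := hrec n
        _ ≤ (l + L) - 1 / (l - δ * c ^ n) := by linarith
        _ ≤ (l + L) - (L + (δ * c ^ n) * c) := by linarith
        _ = l - δ * c ^ (n+1) := by ring
  obtain ⟨n, hn⟩ := pow_unb (l / δ) c hc1
  have : l < δ * c ^ n := by rw [div_lt_iff₀ hδ] at hn; linarith
  linarith [hpos n, key n]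

/-- backward excess growth: upper bound aux -/
private lemma upper_aux (l L : ℝ) (hl : 0 < l) (hlL : l * L = 1) (hl1 : l ≤ 1)
    (a : ℕ → ℝ) (hpos : ∀ n, 0 < a n)
    (hrec : ∀ n, a n ≤ (l + L) - 1 / a (n + 1))
    (δ : ℝ) (hδ : 0 < δ) (h0 : L + δ ≤ a 0) : False := by
  have hld : 0 < l - δ := by
    have h := hrec 0
    have h1 : 1 / a 1 ≤ l - δ := by linarith
    have := one_div_pos.2 (hpos 1)
    linarith
  set c : ℝ := 1 / (l * (l - δ)) with hc
  have hll : 0 < l * (l - δ) := mul_pos hl hld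
  have hcpos : 0 < c := by positivity
  have hcc : c * (l * (l - δ)) = 1 := by rw [hc]; field_simp
  have hc1 : 1 < c := by rw [hc, lt_div_iff₀ hll]; nlinarith
  have key : ∀ n, L + δ * c ^ n ≤ a n := by
    intro n
    induction n with
    | zero => simpa using h0
    | succ n ih =>
      have hcn : (1:ℝ) ≤ c ^ n := one_le_pow₀ (le_of_lt hc1)
      have hd : δ ≤ δ * c ^ n := by nlinarith
      have h2 := hrec n
      have h1 : 1 / a (n+1) ≤ l - δ * c ^ n := by linarith
      have hpos2 : 0 < l - δ * c ^ n := lt_of_lt_of_le (one_div_pos.2 (hpos (n+1))) h1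
      -- a (n+1) ≥ 1/(l - δc^n)
      have h4 : 1 / (l - δ * c ^ n) ≤ a (n+1) := by
        rw [div_le_iff₀ hpos2]
        nlinarith [(div_le_iff₀ (hpos (n+1))).1 h1]
      have h3 : L + (δ * c ^ n) * c ≤ 1 / (l - δ * c ^ n) := by
        rw [le_div_iff₀ hpos2]
        nlinarith [mul_nonneg (mul_nonneg hcpos.le hl.le)
          (sub_nonneg.2 hd), mul_pos hδ (pow_pos hcpos n)]
      calc L + δ * c ^ (n+1) = L + (δ * c ^ n) * c := by ring
        _ ≤ 1 / (l - δ * c ^ n) := h3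
        _ ≤ a (n+1) := h4
  obtain ⟨n, hn⟩ := pow_unb (l / δ) c hc1
  have hgt : l < δ * c ^ n := by rw [div_lt_iff₀ hδ] at hn; linarith
  have h2 := hrec n
  have h1 : 1 / a (n+1) ≤ l - δ * c ^ n := by linarith [key n]
  have := one_div_pos.2 (hpos (n+1))
  linarith

/-- If slopes `ℓ_j > 0` evolve by `ℓ_{j+1} = β_j − 1/ℓ_j` along a bi-infinite
orbit, and `β_j ≤ M` with `M ≥ 2`, then every slope lies in `[ℓ₋, ℓ₊]` where
`ℓ∓ = (M ∓ √(M² − 4))/2`. -/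
theorem stmt3 (M : ℝ) (hM : 2 ≤ M) (β ℓ : ℤ → ℝ)
    (hpos : ∀ j, 0 < ℓ j)
    (hrec : ∀ j, ℓ (j + 1) = β j - 1 / ℓ j)
    (hβ : ∀ j, β j ≤ M) :
    ∀ j : ℤ, (M - Real.sqrt (M ^ 2 - 4)) / 2 ≤ ℓ j ∧
      ℓ j ≤ (M + Real.sqrt (M ^ 2 - 4)) / 2 := by
  have hM2 : (0:ℝ) ≤ M ^ 2 - 4 := by nlinarith
  set s := Real.sqrt (M ^ 2 - 4) with hsdef
  have hs0 : 0 ≤ s := Real.sqrt_nonneg _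
  have hs2 : s ^ 2 = M ^ 2 - 4 := Real.sq_sqrt hM2
  set l := (M - s) / 2 with hldef
  set L := (M + s) / 2 with hLdef
  have hsM : s < M := by nlinarith
  have hl : 0 < l := by rw [hldef]; linarith
  have hlL : l * L = 1 := by rw [hldef, hLdef]; nlinarith
  have hsum : l + L = M := by rw [hldef, hLdef]; ring
  have hl1 : l ≤ 1 := by nlinarith
  intro j
  have step : ∀ k : ℤ, ℓ (k + 1) ≤ (l + L) - 1 / ℓ k := by
    intro k
    rw [hrec k, hsum]
    have := hβ k
    linarith
  constructor
  · by_contra h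
    push_neg at h
    refine lower_aux l L hl hlL hl1 (fun n => ℓ (j + n)) (fun n => hpos _)
      (fun n => ?_) (l - ℓ j) (by linarith) (by simp)
    push_cast
    rw [show j + ((n:ℤ) + 1) = j + n + 1 by ring]
    exact step _
  · by_contra h
    push_neg at h
    refine upper_aux l L hl hlL hl1 (fun n => ℓ (j - n)) (fun n => hpos _)
      (fun n => ?_) (ℓ j - L) (by linarith) (by simp)
    push_cast
    rw [show j - ((n:ℤ) + 1) = j - n - 1 by ring]
    have := step (j - (n:ℤ) - 1)
    rw [show j - (n:ℤ) - 1 + 1 = j - n by ring] at this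
    exact this
end

section
/- Let m ∈ ℝ and M ≥ 2, set ℓ₋ = (M − √(M² − 4))/2 and ℓ₊ = (M + √(M² − 4))/2, and assume ℓ₋ > m − 1/ℓ₊. Then there do not exist real sequences (β_j)_{j∈ℤ} and (ℓ_j)_{j∈ℤ} such that ℓ_j > 0 for all j, ℓ_{j+1} = β_j − 1/ℓ_j for all j, β_j ≤ M for all j, and β_{j₀} ≤ m for some index j₀. -/
set_option maxHeartbeats 1600000 in
/-- With `M ≥ 2`, `ℓ∓ = (M ∓ √(M² − 4))/2`, and `ℓ₋ > m − 1/ℓ₊`, there is no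
bi-infinite orbit of positive slopes `ℓ_{j+1} = β_j − 1/ℓ_j` with `β_j ≤ M` everywhere and
`β_{j₀} ≤ m` at some index. -/
theorem stmt4 (m M : ℝ) (hM : 2 ≤ M)
    (hcrit : (M - Real.sqrt (M ^ 2 - 4)) / 2 >
      m - 1 / ((M + Real.sqrt (M ^ 2 - 4)) / 2)) :
    ¬ ∃ (β ℓ : ℤ → ℝ), (∀ j, 0 < ℓ j) ∧ (∀ j, ℓ (j + 1) = β j - 1 / ℓ j) ∧
      (∀ j, β j ≤ M) ∧ (∃ j₀, β j₀ ≤ m) := by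
  rintro ⟨β, ℓ, hpos, hrec, hβM, j₀, hβm⟩
  have hM0 : (0:ℝ) < M := by linarith
  set s := Real.sqrt (M ^ 2 - 4) with hsdef
  have hs0 : 0 ≤ s := Real.sqrt_nonneg _
  have hs2 : s ^ 2 = M ^ 2 - 4 := Real.sq_sqrt (by nlinarith)
  have hsM : s < M := by nlinarith
  set a := (M - s) / 2 with hadef
  set b := (M + s) / 2 with hbdef
  have ha0 : 0 < a := by rw [hadef]; linarith
  have hb0 : 0 < b := by rw [hbdef]; linarith
  have hab1 : a * b = 1 := by
    rw [hadef, hbdef]; linear_combination (-(1:ℝ)/4) * hs2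
  have habM : a + b = M := by rw [hadef, hbdef]; ring
  have haleb : a ≤ b := by rw [hadef, hbdef]; linarith
  have hinvb : 1 / b = a := by
    rw [div_eq_iff hb0.ne']; linarith [hab1]
  -- hcrit now reads: a > m - 1/b, i.e. m < 2a
  rw [hinvb] at hcrit
  -- every ℓ j is < M (from positivity of 1/ℓ at the previous index)
  have ubd : ∀ j : ℤ, ℓ j < M := by
    intro j
    have h := hrec (j - 1)
    rw [show j - 1 + 1 = j by ring] at h
    have h1 : 0 < 1 / ℓ (j - 1) := one_div_pos.mpr (hpos _)
    have h2 := hβM (j - 1)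
    linarith
  rcases le_or_gt (ℓ j₀) b with hcase | hcase
  · -- forward escape below a
    have hstep0 : ℓ (j₀ + 1) ≤ m - a := by
      have h1 : 1 / b ≤ 1 / ℓ j₀ := one_div_le_one_div_of_le (hpos j₀) hcase
      rw [hinvb] at h1
      have h2 := hrec j₀
      linarith
    set c₀ : ℝ := m - a with hc₀def
    have hc0a : c₀ < a := by rw [hc₀def]; linarith
    have hc00 : 0 < c₀ := lt_of_lt_of_le (hpos _) hstep0
    set δ : ℝ := (a - c₀) * (b - c₀) / c₀ with hδdef
    have hδ0 : 0 < δ := by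
      apply div_pos (mul_pos (by linarith) (by linarith)) hc00
    have hδc : δ * c₀ = (a - c₀) * (b - c₀) := by
      rw [hδdef]; field_simp
    have key : ∀ n : ℕ, ℓ (j₀ + 1 + n) ≤ c₀ - n * δ := by
      intro n
      induction n with
      | zero => simpa using hstep0
      | succ n ih =>
        set cn : ℝ := c₀ - n * δ with hcndef
        have hcn0 : 0 < cn := lt_of_lt_of_le (hpos _) ih
        have hcnle : cn ≤ c₀ := by
          have h0 : (0:ℝ) ≤ (n:ℝ) * δ := mul_nonneg (Nat.cast_nonneg n) hδ0.le
          rw [hcndef]; linarith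
        -- forward step
        have hf : ℓ (j₀ + 1 + n + 1) ≤ M - 1 / cn := by
          have h1 : 1 / cn ≤ 1 / ℓ (j₀ + 1 + n) :=
            one_div_le_one_div_of_le (hpos _) ih
          have h2 := hrec (j₀ + 1 + n)
          have h3 := hβM (j₀ + 1 + n)
          linarith
        have hkey : M - 1 / cn ≤ cn - δ := by
          have h1 : (M - cn + δ) * cn ≤ 1 := by
            nlinarith [mul_nonneg (by linarith : (0:ℝ) ≤ c₀ - cn)
                (by linarith : (0:ℝ) ≤ a + b - c₀ - cn),
              mul_nonneg hδ0.le (by linarith : (0:ℝ) ≤ c₀ - cn), hδc, hab1, habM]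
          have h2 : M - cn + δ ≤ 1 / cn := by
            rw [le_div_iff₀ hcn0]; linarith
          linarith
        have hidx : j₀ + 1 + ((n : ℤ) + 1) = j₀ + 1 + n + 1 := by ring
        push_cast
        rw [hidx]
        linarith [le_trans hf hkey]
    obtain ⟨n, hn⟩ := exists_nat_gt (c₀ / δ)
    have h1 := key n
    have h2 := hpos (j₀ + 1 + n)
    have h3 : c₀ < n * δ := by
      rw [div_lt_iff₀ hδ0] at hn; linarith
    linarith
  · -- backward escape above b
    set L : ℝ := ℓ j₀ with hLdef
    have hLb : b < L := hcase
    set δ : ℝ := (L - a) * (L - b) / M with hδdef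
    have hδ0 : 0 < δ :=
      div_pos (mul_pos (by linarith) (by linarith)) hM0
    have hδM : δ * M = (L - a) * (L - b) := by
      rw [hδdef]; field_simp
    have key : ∀ n : ℕ, L + n * δ ≤ ℓ (j₀ - n) := by
      intro n
      induction n with
      | zero => simp [hLdef]
      | succ n ih =>
        set cn : ℝ := L + n * δ with hcndef
        have hcnL : L ≤ cn := by
          have h0 : (0:ℝ) ≤ (n:ℝ) * δ := mul_nonneg (Nat.cast_nonneg n) hδ0.le
          rw [hcndef]; linarith
        have hcn0 : 0 < cn := by linarith
        -- backward step: from ℓ (j₀ - n) = β (j₀ - n - 1) - 1 / ℓ (j₀ - n - 1)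
        have h := hrec (j₀ - n - 1)
        rw [show j₀ - (n:ℤ) - 1 + 1 = j₀ - n by ring] at h
        have hβ := hβM (j₀ - n - 1)
        have hl0 := hpos (j₀ - n - 1)
        have hinv : 1 / ℓ (j₀ - n - 1) ≤ M - cn := by
          have := ih; linarith
        have hinvpos : 0 < 1 / ℓ (j₀ - n - 1) := one_div_pos.mpr hl0
        have hMcn : 0 < M - cn := lt_of_lt_of_le hinvpos hinv
        -- ℓ (j₀ - n - 1) ≥ 1/(M - cn) ≥ cn + δ
        have h1 : 1 ≤ (M - cn) * ℓ (j₀ - n - 1) :=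
          (div_le_iff₀ hl0).mp hinv
        have h2 : cn + δ ≤ 1 / (M - cn) := by
          rw [le_div_iff₀ hMcn]
          nlinarith [mul_nonneg (by linarith : (0:ℝ) ≤ cn - L)
              (by linarith : (0:ℝ) ≤ cn + L - a - b),
            mul_nonneg hδ0.le (by linarith : (0:ℝ) ≤ cn), hδM, hab1, habM]
        have h3 : 1 / (M - cn) ≤ ℓ (j₀ - n - 1) := by
          rw [div_le_iff₀ hMcn]; nlinarith
        have hidx : j₀ - ((n : ℤ) + 1) = j₀ - n - 1 := by ring
        push_cast
        rw [hidx]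
        linarith
    obtain ⟨n, hn⟩ := exists_nat_gt ((M - L) / δ)
    have h1 := key n
    have h2 := ubd (j₀ - n)
    have h3 : M - L < n * δ := by
      rw [div_lt_iff₀ hδ0] at hn; linarith
    linarith
end

section
/- For every real k > 4/3, there do not exist sequences (x_j)_{j∈ℤ} in ℝ and (ℓ_j)_{j∈ℤ} in ℝ with ℓ_j > 0 for all j, ℓ_{j+1} = (2 − k·cos(2π·x_j)) − 1/ℓ_j for all j, and x_{j₀} ∈ ℤ for some index j₀. (This is the 'Mather 4/3' criterion applied to the standard map: for k > 4/3 no invariant circle crosses the vertical line x = 0, so k_c ≤ 4/3.) -/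
/-!
Since `β ≤ 2 + k`, every slope sequence satisfies `ℓ_{j+1} ≤ c - 1/ℓ_j` with `c = 2 + k`, and so
does the reversed sequence `j ↦ 1/ℓ_{-j}`. A positive sequence obeying this inequality cannot
start at a value `t ≤ 1` with `t + 1/t > c`: it would decrease by at least `t + 1/t - c` at every
step. Hence `ℓ_j + 1/ℓ_j ≤ 2 + k` for all `j`. At a crossing of the line `x = 0` we have
`ℓ_{j₀+1} + 1/ℓ_{j₀} = 2 - k`, and two positive numbers with sum `2 - k` and both `t + 1/t ≤ 2 + k`
exist only for `k ≤ 4/3`.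
-/

open Real

lemma add_inv_antitoneOn_Ioc : AntitoneOn (fun t : ℝ => t + t⁻¹) (Set.Ioc 0 1) := by
  rintro s ⟨hs, -⟩ t ⟨-, ht⟩ hst
  have ht0 : 0 < t := hs.trans_le hst
  have hst' : s * t ≤ 1 := by nlinarith
  have key : (t + t⁻¹) - (s + s⁻¹) = (t - s) * (s * t - 1) / (s * t) := by
    field_simp
    ring
  have : (t - s) * (s * t - 1) / (s * t) ≤ 0 :=
    div_nonpos_of_nonpos_of_nonneg (mul_nonpos_of_nonneg_of_nonpos (by linarith) (by linarith))
      (by positivity)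
  simp only
  linarith

lemma add_inv_le_of_le_sub_inv_nat {c : ℝ} {a : ℕ → ℝ} (hpos : ∀ n, 0 < a n)
    (hrec : ∀ n, a (n + 1) ≤ c - (a n)⁻¹) (ha₀ : a 0 ≤ 1) : a 0 + (a 0)⁻¹ ≤ c := by
  by_contra! h
  set δ := a 0 + (a 0)⁻¹ - c
  have hδ : 0 < δ := sub_pos.2 h
  have hdecr : ∀ n : ℕ, a n ≤ a 0 - n * δ := by
    intro n
    induction n with
    | zero => simp
    | succ n ih =>
      have han : a n ≤ a 0 := ih.trans (sub_le_self _ (by positivity))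
      -- below `1`, `t + t⁻¹` grows as `t` decreases, so every step lowers the sequence by `δ`
      have := add_inv_antitoneOn_Ioc ⟨hpos n, han.trans ha₀⟩ ⟨hpos 0, ha₀⟩ han
      push_cast
      linarith [hrec n]
  obtain ⟨n, hn⟩ := exists_nat_gt (a 0 / δ)
  rw [div_lt_iff₀ hδ] at hn
  linarith [hdecr n, hpos n]

lemma add_inv_le_of_le_sub_inv {c : ℝ} {ℓ : ℤ → ℝ} (hpos : ∀ j, 0 < ℓ j)
    (hrec : ∀ j, ℓ (j + 1) ≤ c - (ℓ j)⁻¹) (j : ℤ) : ℓ j + (ℓ j)⁻¹ ≤ c := by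
  rcases le_total (ℓ j) 1 with h | h
  · simpa using add_inv_le_of_le_sub_inv_nat (a := fun n => ℓ (j + n)) (fun n => hpos _)
      (fun n => by simpa [add_assoc] using hrec (j + n)) (by simpa using h)
  · have hback : ∀ n : ℕ, (ℓ (j - (n + 1 : ℕ)))⁻¹ ≤ c - ((ℓ (j - n))⁻¹)⁻¹ := by
      intro n
      have := hrec (j - n - 1)
      rw [sub_add_cancel] at this
      push_cast
      rw [inv_inv, ← sub_sub]
      linarith
    simpa [add_comm] using add_inv_le_of_le_sub_inv_nat (a := fun n => (ℓ (j - n))⁻¹)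
      (fun n => inv_pos.2 (hpos _)) hback (by simpa using inv_le_one_of_one_le₀ h)

lemma le_four_thirds_of_add_inv_le {k s t : ℝ} (hs : 0 < s) (ht : 0 < t) (hsum : s + t = 2 - k)
    (hs' : s + s⁻¹ ≤ 2 + k) (ht' : t + t⁻¹ ≤ 2 + k) : k ≤ 4 / 3 := by
  have hquad : ∀ u, 0 < u → u + u⁻¹ ≤ 2 + k → u ^ 2 + 1 ≤ (2 + k) * u := fun u hu h => by
    have := mul_le_mul_of_nonneg_left h hu.le
    rwa [mul_add, mul_inv_cancel₀ hu.ne', ← sq, mul_comm] at this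
  -- adding the two: `(2 - k)² / 2 + 2 ≤ s² + t² + 2 ≤ (2 + k)(2 - k)`, i.e. `3k² ≤ 4k`
  nlinarith [hquad s hs hs', hquad t ht ht', sq_nonneg (s - t)]

/-- The "Mather 4/3" criterion for the standard map: for every `k > 4/3`,
there are no sequences `(x_j)` and `(ℓ_j)` with all `ℓ_j > 0`,
`ℓ_{j+1} = (2 − k cos(2π x_j)) − 1/ℓ_j`, and `x_{j₀} ∈ ℤ` for some index `j₀`. -/
theorem stmt5 (k : ℝ) (hk : 4 / 3 < k) :
    ¬ ∃ (x ℓ : ℤ → ℝ), (∀ j, 0 < ℓ j) ∧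
      (∀ j, ℓ (j + 1) = (2 - k * Real.cos (2 * Real.pi * x j)) - 1 / ℓ j) ∧
      (∃ (j₀ : ℤ) (m : ℤ), x j₀ = (m : ℝ)) := by
  rintro ⟨x, ℓ, hpos, hrec, j₀, m, hm⟩
  have hbound : ∀ j, ℓ (j + 1) ≤ 2 + k - (ℓ j)⁻¹ := fun j => by
    rw [hrec j, one_div]
    nlinarith [neg_one_le_cos (2 * π * x j)]
  have hcross : ℓ (j₀ + 1) + (ℓ j₀)⁻¹ = 2 - k := by
    have hcos : cos (2 * π * x j₀) = 1 := by
      rw [hm, show 2 * π * (m : ℝ) = m * (2 * π) by ring, cos_int_mul_two_pi]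
    rw [hrec, hcos, one_div]
    ring
  have hnext := add_inv_le_of_le_sub_inv hpos hbound (j₀ + 1)
  have hcur := add_inv_le_of_le_sub_inv hpos hbound j₀
  have := le_four_thirds_of_add_inv_le (hpos _) (inv_pos.2 (hpos j₀)) hcross hnext
    (by rwa [inv_inv, add_comm])
  linarith
end

section
/- Let n ≥ 1, let Φ : ℝⁿ → ℝⁿ be continuously differentiable, let x_c ∈ ℝⁿ and P be a real n×n matrix, and let S = {x_c + Pη : η ∈ [−1,1]ⁿ}. Let x_c′ ∈ ℝⁿ be arbitrary, let A be an invertible real n×n matrix, and let w ∈ ℝⁿ satisfy, for every j and every x ∈ S, |(A⁻¹·(Φ(x_c) − x_c′))_j| + Σ_{k=1}^{n} |(A⁻¹·DΦ_x·P)_{jk}| ≤ w_j, where DΦ_x is the Jacobian matrix of Φ at x. Then for every x ∈ S and every j, |(A⁻¹·(Φ(x) − x_c′))_j| ≤ w_j; equivalently, Φ(S) is contained in the prism {x_c′ + A·W·η : η ∈ [−1,1]ⁿ} where W is the diagonal matrix with diagonal entries w_1,…,w_n. -/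
/-!
Put `h(ζ) = A⁻¹(Φ(x_c + Pζ) − x_c′)`. The cube `[−1,1]ⁿ` is the closed unit ball of the sup norm,
and for that norm the operator norm of `dh_j` is the `ℓ¹`-norm of the `j`-th row of the Jacobian
`A⁻¹ DΦ P` of `h`, which the hypothesis bounds by `w_j − |h_j(0)|`. The mean value inequality on the
cube gives `|h_j(η) − h_j(0)| ≤ w_j − |h_j(0)|`, hence `|h_j(η)| ≤ w_j`; the prism form follows by
taking `η_j = h_j / w_j`.
-/

open Matrix

/-- The Jacobian matrix of a map `Φ : ℝⁿ → ℝⁿ` at a point `x`: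
`(jacobian Φ x) j k = ∂Φ_j/∂x_k (x)`. -/
noncomputable def jacobian {n : ℕ} (Φ : (Fin n → ℝ) → (Fin n → ℝ)) (x : Fin n → ℝ) :
    Matrix (Fin n) (Fin n) ℝ :=
  fun j k => fderiv ℝ Φ x (Pi.single k 1) j

open Metric

theorem jacobian_eq_toMatrix' {n : ℕ} (Φ : (Fin n → ℝ) → (Fin n → ℝ)) (x : Fin n → ℝ) :
    jacobian Φ x = LinearMap.toMatrix' (fderiv ℝ Φ x : (Fin n → ℝ) →ₗ[ℝ] Fin n → ℝ) :=
  rfl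

theorem fderiv_apply_eq_jacobian_mulVec {n : ℕ} (Φ : (Fin n → ℝ) → (Fin n → ℝ))
    (x v : Fin n → ℝ) : fderiv ℝ Φ x v = jacobian Φ x *ᵥ v := by
  rw [jacobian_eq_toMatrix', ← Matrix.toLin'_apply, Matrix.toLin'_toMatrix']
  rfl

section AffineComp

variable {n : ℕ} {Φ : (Fin n → ℝ) → (Fin n → ℝ)} (A P : Matrix (Fin n) (Fin n) ℝ)
  (b c η : Fin n → ℝ)

theorem hasFDerivAt_mulVec_sub_comp_affine (hΦ : DifferentiableAt ℝ Φ (c + P *ᵥ η)) :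
    HasFDerivAt (fun ζ => A *ᵥ (Φ (c + P *ᵥ ζ) - b))
      (A.mulVecLin.toContinuousLinearMap.comp
        ((fderiv ℝ Φ (c + P *ᵥ η)).comp P.mulVecLin.toContinuousLinearMap)) η :=
  A.mulVecLin.toContinuousLinearMap.hasFDerivAt.comp η
    ((hΦ.hasFDerivAt.comp η (P.mulVecLin.toContinuousLinearMap.hasFDerivAt.const_add c)).sub_const b)

theorem jacobian_mulVec_sub_comp_affine (hΦ : DifferentiableAt ℝ Φ (c + P *ᵥ η)) :
    jacobian (fun ζ => A *ᵥ (Φ (c + P *ᵥ ζ) - b)) η = A * jacobian Φ (c + P *ᵥ η) * P := by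
  ext j k
  change fderiv ℝ (fun ζ => A *ᵥ (Φ (c + P *ᵥ ζ) - b)) η (Pi.single k 1) j = _
  simp only [(hasFDerivAt_mulVec_sub_comp_affine A P b c η hΦ).fderiv,
    ContinuousLinearMap.comp_apply, LinearMap.coe_toContinuousLinearMap', mulVecLin_apply,
    fderiv_apply_eq_jacobian_mulVec, mulVec_mulVec, mulVec_single_one]
  rfl

end AffineComp

theorem abs_mulVec_apply_le {ι κ : Type*} [Fintype ι] (M : Matrix κ ι ℝ) (v : ι → ℝ) (j : κ) :
    |(M *ᵥ v) j| ≤ (∑ k, |M j k|) * ‖v‖ := by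
  rw [Finset.sum_mul]
  refine (Finset.abs_sum_le_sum_abs _ _).trans (Finset.sum_le_sum fun k _ => ?_)
  rw [abs_mul]
  exact mul_le_mul_of_nonneg_left (norm_le_pi_norm v k) (abs_nonneg _)

theorem abs_apply_sub_le_of_sum_abs_jacobian_le {n : ℕ} {h : (Fin n → ℝ) → (Fin n → ℝ)}
    {s : Set (Fin n → ℝ)} (hs : Convex ℝ s) (hh : ∀ x ∈ s, DifferentiableAt ℝ h x) {j : Fin n}
    {C : ℝ} (hC : ∀ x ∈ s, ∑ k, |jacobian h x j k| ≤ C) {x y : Fin n → ℝ} (hx : x ∈ s)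
    (hy : y ∈ s) : |h y j - h x j| ≤ C * ‖y - x‖ := by
  have hderiv : ∀ z ∈ s, HasFDerivWithinAt (fun z => h z j)
      ((ContinuousLinearMap.proj j).comp (fderiv ℝ h z)) s z := fun z hz =>
    ((ContinuousLinearMap.proj (R := ℝ) (φ := fun _ : Fin n => ℝ) j).hasFDerivAt.comp z
      (hh z hz).hasFDerivAt).hasFDerivWithinAt
  have hbound : ∀ z ∈ s, ‖(ContinuousLinearMap.proj j).comp (fderiv ℝ h z)‖ ≤ C := fun z hz =>
    ContinuousLinearMap.opNorm_le_bound _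
      ((Finset.sum_nonneg fun _ _ => abs_nonneg _).trans (hC z hz)) fun v => by
        simpa [fderiv_apply_eq_jacobian_mulVec] using
          (abs_mulVec_apply_le _ v j).trans (mul_le_mul_of_nonneg_right (hC z hz) (norm_nonneg v))
  simpa using hs.norm_image_sub_le_of_norm_hasFDerivWithin_le hderiv hbound hx hy

theorem mem_closedBall_zero_one_iff {ι : Type*} [Fintype ι] {η : ι → ℝ} :
    η ∈ closedBall (0 : ι → ℝ) 1 ↔ ∀ i, |η i| ≤ 1 := by
  simp [pi_norm_le_iff_of_nonneg]

theorem abs_mulVec_sub_le_of_sum_abs_jacobian_le {n : ℕ} {Φ : (Fin n → ℝ) → (Fin n → ℝ)}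
    (hΦ : Differentiable ℝ Φ) {A P : Matrix (Fin n) (Fin n) ℝ} {b c w : Fin n → ℝ} {j : Fin n}
    (hw : ∀ ζ ∈ closedBall (0 : Fin n → ℝ) 1,
      |(A *ᵥ (Φ c - b)) j| + ∑ k, |(A * jacobian Φ (c + P *ᵥ ζ) * P) j k| ≤ w j)
    {η : Fin n → ℝ} (hη : η ∈ closedBall (0 : Fin n → ℝ) 1) :
    |(A *ᵥ (Φ (c + P *ᵥ η) - b)) j| ≤ w j := by
  set h : (Fin n → ℝ) → Fin n → ℝ := fun ζ => A *ᵥ (Φ (c + P *ᵥ ζ) - b)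
  have h0 : h 0 = A *ᵥ (Φ c - b) := by simp [h]
  have hmvt : |h η j - h 0 j| ≤ (w j - |h 0 j|) * ‖η - 0‖ := by
    refine abs_apply_sub_le_of_sum_abs_jacobian_le (convex_closedBall 0 1)
      (fun ζ _ => (hasFDerivAt_mulVec_sub_comp_affine A P b c ζ (hΦ _)).differentiableAt)
      (fun ζ hζ => ?_) (mem_closedBall_self zero_le_one) hη
    rw [jacobian_mulVec_sub_comp_affine A P b c ζ (hΦ _), h0]
    linarith [hw ζ hζ]
  have hC : 0 ≤ w j - |h 0 j| := by
    rw [h0]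
    linarith [hw 0 (mem_closedBall_self zero_le_one),
      Finset.sum_nonneg fun k (_ : k ∈ Finset.univ) =>
        abs_nonneg ((A * jacobian Φ (c + P *ᵥ 0) * P) j k)]
  have hη' : ‖η - 0‖ ≤ 1 := by simpa using hη
  linarith [abs_sub_abs_le_abs_sub (h η j) (h 0 j), mul_le_of_le_one_right hC hη']

theorem exists_eq_diagonal_mulVec_of_abs_le {ι : Type*} [Fintype ι] [DecidableEq ι]
    {u w : ι → ℝ} (h : ∀ i, |u i| ≤ w i) :
    ∃ η : ι → ℝ, (∀ i, |η i| ≤ 1) ∧ u = diagonal w *ᵥ η := by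
  refine ⟨fun i => u i / w i, fun i => ?_, funext fun i => ?_⟩
  · rw [abs_div]
    exact div_le_one_of_le₀ ((h i).trans (le_abs_self _)) (abs_nonneg _)
  · rw [mulVec_diagonal, mul_div_cancel_of_imp']
    intro hw
    simpa [hw] using h i

theorem stmt6_general {n : ℕ}
    (Φ : (Fin n → ℝ) → (Fin n → ℝ)) (hΦ : ContDiff ℝ 1 Φ)
    (xc : Fin n → ℝ) (P : Matrix (Fin n) (Fin n) ℝ)
    (S : Set (Fin n → ℝ))
    (hS : S = {x | ∃ η : Fin n → ℝ, (∀ i, |η i| ≤ 1) ∧ x = xc + P.mulVec η})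
    (xc' : Fin n → ℝ) (A : Matrix (Fin n) (Fin n) ℝ) (hA : IsUnit A.det)
    (w : Fin n → ℝ)
    (hw : ∀ j : Fin n, ∀ x ∈ S,
      |A⁻¹.mulVec (Φ xc - xc') j| + ∑ k : Fin n, |(A⁻¹ * jacobian Φ x * P) j k| ≤ w j) :
    (∀ x ∈ S, ∀ j : Fin n, |A⁻¹.mulVec (Φ x - xc') j| ≤ w j) ∧
      (∀ x ∈ S, ∃ η : Fin n → ℝ, (∀ i, |η i| ≤ 1) ∧
        Φ x = xc' + (A * Matrix.diagonal w).mulVec η) := by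
  have hbound : ∀ x ∈ S, ∀ j, |(A⁻¹ *ᵥ (Φ x - xc')) j| ≤ w j := by
    rw [hS]
    rintro _ ⟨η, hη, rfl⟩ j
    exact abs_mulVec_sub_le_of_sum_abs_jacobian_le (hΦ.differentiable one_ne_zero)
      (fun ζ hζ => hw j _ (hS ▸ ⟨ζ, mem_closedBall_zero_one_iff.1 hζ, rfl⟩))
      (mem_closedBall_zero_one_iff.2 hη)
  refine ⟨hbound, fun x hx => ?_⟩
  obtain ⟨η, hη, hu⟩ := exists_eq_diagonal_mulVec_of_abs_le (hbound x hx)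
  refine ⟨η, hη, ?_⟩
  rw [← mulVec_mulVec, ← hu, mulVec_mulVec, mul_nonsing_inv A hA, one_mulVec]
  abel

/-- MacKay–Percival prism-bounding lemma.  If `S` is the prism with center
`x_c` and matrix `P`, `A` is invertible, and
`|(A⁻¹(Φ(x_c) − x_c′))_j| + Σ_k |(A⁻¹ ⬝ DΦ_x ⬝ P)_{jk}| ≤ w_j` for all `x ∈ S` and `j`,
then for all `x ∈ S` and `j`, `|(A⁻¹(Φ(x) − x_c′))_j| ≤ w_j`; equivalently `Φ(S)` is
contained in the prism with center `x_c′` and matrix `A ⬝ diagonal w`. -/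
theorem stmt6 {n : ℕ} (hn : 1 ≤ n)
    (Φ : (Fin n → ℝ) → (Fin n → ℝ)) (hΦ : ContDiff ℝ 1 Φ)
    (xc : Fin n → ℝ) (P : Matrix (Fin n) (Fin n) ℝ)
    (S : Set (Fin n → ℝ))
    (hS : S = {x | ∃ η : Fin n → ℝ, (∀ i, |η i| ≤ 1) ∧ x = xc + P.mulVec η})
    (xc' : Fin n → ℝ) (A : Matrix (Fin n) (Fin n) ℝ) (hA : IsUnit A.det)
    (w : Fin n → ℝ)
    (hw : ∀ j : Fin n, ∀ x ∈ S,
      |A⁻¹.mulVec (Φ xc - xc') j| + ∑ k : Fin n, |(A⁻¹ * jacobian Φ x * P) j k| ≤ w j) :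
    (∀ x ∈ S, ∀ j : Fin n, |A⁻¹.mulVec (Φ x - xc') j| ≤ w j) ∧
      (∀ x ∈ S, ∃ η : Fin n → ℝ, (∀ i, |η i| ≤ 1) ∧
        Φ x = xc' + (A * Matrix.diagonal w).mulVec η) :=
  stmt6_general Φ hΦ xc P S hS xc' A hA w hw
end

section
/- Let n ≥ 1, let β, d, d′ be real symmetric positive definite n×n matrices with d′ = β − d⁻¹, and let c be a real number with 0 < c ≤ λ₋(d). Then λ₋(d′) ≤ λ₋(β) − 1/(Tr(d) − (n−1)·c). -/
/-
Write `T = Tr(d) − (n−1)c`. Every eigenvalue of `d` is at most `T`, since the other `n − 1` are at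
least `c`; hence `T⁻¹ • 1 ≤ d⁻¹` in the Loewner order. Adding `λ₋(d′) • 1 ≤ d′` gives
`(λ₋(d′) + T⁻¹) • 1 ≤ d′ + d⁻¹ = β`, that is, `λ₋(d′) + T⁻¹ ≤ λ₋(β)`.
-/

open Matrix

/-- The least eigenvalue of a real symmetric (Hermitian) matrix. -/
noncomputable def minEig {n : ℕ} {M : Matrix (Fin n) (Fin n) ℝ}
    (hM : M.IsHermitian) : ℝ :=
  ⨅ i, hM.eigenvalues i

open scoped MatrixOrder ComplexOrder

namespace Matrix

variable {ι 𝕜 : Type*} [Fintype ι] [DecidableEq ι] [RCLike 𝕜]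

namespace IsHermitian

variable {A : Matrix ι ι 𝕜} (hA : A.IsHermitian)
include hA

lemma algebraMap_le_iff_le_eigenvalues {r : ℝ} :
    algebraMap ℝ (Matrix ι ι 𝕜) r ≤ A ↔ ∀ i, r ≤ hA.eigenvalues i := by
  rw [algebraMap_le_iff_le_spectrum hA.isSelfAdjoint, hA.spectrum_real_eq_range_eigenvalues,
    Set.forall_mem_range]

lemma eigenvalues_le_re_trace_sub {c : ℝ} (hc : ∀ i, c ≤ hA.eigenvalues i) (j : ι) :
    hA.eigenvalues j ≤ RCLike.re A.trace - (Fintype.card ι - 1) * c := by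
  have : hA.eigenvalues j - c ≤ ∑ i, (hA.eigenvalues i - c) :=
    Finset.single_le_sum (fun i _ => sub_nonneg.mpr (hc i)) (Finset.mem_univ j)
  rw [Finset.sum_sub_distrib, Finset.sum_const, Finset.card_univ, nsmul_eq_mul] at this
  rw [hA.trace_eq_sum_eigenvalues, map_sum]
  simp only [RCLike.ofReal_re]
  linarith

end IsHermitian

lemma PosDef.algebraMap_inv_le_inv {A : Matrix ι ι 𝕜} (hA : A.PosDef) {T : ℝ}
    (hT : ∀ i, hA.1.eigenvalues i ≤ T) : algebraMap ℝ (Matrix ι ι 𝕜) T⁻¹ ≤ A⁻¹ := by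
  rw [algebraMap_le_iff_le_spectrum hA.1.inv.isSelfAdjoint]
  intro x hx
  lift A to (Matrix ι ι 𝕜)ˣ using hA.isUnit
  rw [← coe_units_inv, ← spectrum.map_inv, Set.mem_inv,
    hA.1.spectrum_real_eq_range_eigenvalues] at hx
  obtain ⟨i, hi⟩ := hx
  simpa [hi] using inv_anti₀ (hA.eigenvalues_pos i) (hT i)

end Matrix

section minEig

variable {n : ℕ} {M : Matrix (Fin n) (Fin n) ℝ} (hM : M.IsHermitian)

lemma minEig_le_eigenvalues (i : Fin n) : minEig hM ≤ hM.eigenvalues i :=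
  ciInf_le (Set.finite_range _).bddBelow i

lemma algebraMap_minEig_le : algebraMap ℝ (Matrix (Fin n) (Fin n) ℝ) (minEig hM) ≤ M :=
  (hM.algebraMap_le_iff_le_eigenvalues).mpr (minEig_le_eigenvalues hM)

lemma algebraMap_le_iff_le_minEig [NeZero n] {r : ℝ} :
    algebraMap ℝ (Matrix (Fin n) (Fin n) ℝ) r ≤ M ↔ r ≤ minEig hM := by
  rw [hM.algebraMap_le_iff_le_eigenvalues, minEig, le_ciInf_iff (Set.finite_range _).bddBelow]

end minEig

theorem stmt10_general {n : ℕ} (hn : 1 ≤ n)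
    (β d d' : Matrix (Fin n) (Fin n) ℝ)
    (hβ : β.PosDef) (hd : d.PosDef) (hd' : d'.PosDef)
    (hrec : d' = β - d⁻¹)
    (c : ℝ) (hcle : c ≤ minEig hd.1) :
    minEig hd'.1 ≤ minEig hβ.1 - 1 / (d.trace - ((n : ℝ) - 1) * c) := by
  have : NeZero n := ⟨Nat.one_le_iff_ne_zero.mp hn⟩
  have hd_le_trace : ∀ i, hd.1.eigenvalues i ≤ d.trace - ((n : ℝ) - 1) * c := by
    simpa using hd.1.eigenvalues_le_re_trace_sub fun i => hcle.trans (minEig_le_eigenvalues _ i)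
  rw [one_div, le_sub_iff_add_le, ← algebraMap_le_iff_le_minEig, map_add]
  calc _ ≤ d' + d⁻¹ := add_le_add (algebraMap_minEig_le _) (hd.algebraMap_inv_le_inv hd_le_trace)
    _ = β := by rw [hrec, sub_add_cancel]

/-- If `β`, `d`, `d′` are real symmetric positive definite `n×n` matrices
(`n ≥ 1`) with `d′ = β − d⁻¹`, and `0 < c ≤ λ₋(d)`, then
`λ₋(d′) ≤ λ₋(β) − 1/(Tr(d) − (n−1)·c)`. -/
theorem stmt10 {n : ℕ} (hn : 1 ≤ n)
    (β d d' : Matrix (Fin n) (Fin n) ℝ)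
    (hβ : β.PosDef) (hd : d.PosDef) (hd' : d'.PosDef)
    (hrec : d' = β - d⁻¹)
    (c : ℝ) (hc : 0 < c) (hcle : c ≤ minEig hd.1) :
    minEig hd'.1 ≤ minEig hβ.1 - 1 / (d.trace - ((n : ℝ) - 1) * c) :=
  stmt10_general hn β d d' hβ hd hd' hrec c hcle
end

section
/- Let n ≥ 1 and T ≥ 2n be real, and set Tr_min = (T − √(T² − 4n²))/2 and Tr_max = (T + √(T² − 4n²))/2. Suppose (d_j)_{j∈ℤ} is a bi-infinite sequence of real symmetric positive definite n×n matrices and (β_j)_{j∈ℤ} a sequence of real symmetric n×n matrices with d_{j+1} = β_{j+1} − d_j⁻¹ and Tr(β_j) ≤ T for all j ∈ ℤ. Then Tr_min ≤ Tr(d_j) ≤ Tr_max for every j ∈ ℤ. -/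
/-!
Write `t_j = Tr d_j > 0` and let `a ≤ b` be the roots of `x² - T x + n²`, so `a + b = T` and
`a b = n²`. Cauchy–Schwarz on the eigenvalues gives `n² ≤ Tr d · Tr d⁻¹`, so the recursion yields
`t_j t_{j+1} ≤ T t_j - n²`. If `t_j < a`, the deficits `a - t_{j+k}` then grow at least
geometrically as `k → ∞`, contradicting `t > 0`; if `t_j > b`, the excesses `t_{j-k} - b` grow
geometrically as `k → ∞`, contradicting `t < T`.
-/

open Matrix

namespace Matrix

variable {n 𝕜 : Type*} [Fintype n] [DecidableEq n] [RCLike 𝕜]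

lemma IsHermitian.trace_cfc {A : Matrix n n 𝕜} (hA : A.IsHermitian) (f : ℝ → ℝ) :
    (cfc f A).trace = ∑ i, (f (hA.eigenvalues i) : 𝕜) := by
  rw [hA.cfc_eq, IsHermitian.cfc, Unitary.conjStarAlgAut_apply, trace_mul_comm, ← mul_assoc,
    Unitary.coe_star_mul_self, one_mul, trace_diagonal]
  rfl

lemma PosDef.trace_inv {A : Matrix n n ℝ} (hA : A.PosDef) :
    A⁻¹.trace = ∑ i, (hA.1.eigenvalues i)⁻¹ := by
  rw [nonsing_inv_eq_ringInverse,
    ← cfc_ringInverse_id (R := ℝ) (a := A) hA.isUnit hA.1.isSelfAdjoint, hA.1.trace_cfc]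
  rfl

lemma PosDef.card_sq_le_trace_mul_trace_inv {A : Matrix n n ℝ} (hA : A.PosDef) :
    (Fintype.card n : ℝ) ^ 2 ≤ A.trace * A⁻¹.trace := by
  rw [hA.trace_inv, hA.1.trace_eq_sum_eigenvalues]
  simpa using Finset.sum_sq_le_sum_mul_sum_of_sq_le_mul Finset.univ (r := fun _ => (1 : ℝ))
    (fun i _ => (hA.eigenvalues_pos i).le) (fun i _ => (inv_pos.2 (hA.eigenvalues_pos i)).le)
    (fun i _ => by simp [mul_inv_cancel₀ (hA.eigenvalues_pos i).ne'])

end Matrix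

/-- `s` increases, so the growth ratio `b / (a - s k) ≥ b / (a - s 0) > 1` is uniform. -/
lemma false_of_mul_le_sub_mul_succ {a b : ℝ} (hab : a ≤ b) {s : ℕ → ℝ} (h₀ : 0 < s 0)
    (hlt : ∀ k, s k < a) (hstep : ∀ k, b * s k ≤ (a - s k) * s (k + 1)) : False := by
  have hge : ∀ k, s 0 ≤ s k := by
    intro k
    induction k with
    | zero => rfl
    | succ k ih =>
      have := hlt k
      have := hstep k
      nlinarith
  have hratio : 1 < b / (a - s 0) := (one_lt_div (by linarith [hlt 0])).2 (by linarith)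
  have hgeom : ∀ k, b / (a - s 0) * s k ≤ s (k + 1) := fun k => by
    have := hstep k
    rw [div_mul_eq_mul_div, div_le_iff₀ (by linarith [hlt 0])]
    nlinarith [hge k, hge (k + 1)]
  obtain ⟨k, hk⟩ := ((tendsto_atTop_of_geom_le h₀ hratio hgeom).eventually_ge_atTop a).exists
  exact (hlt k).not_ge hk

lemma mem_Icc_of_mul_succ_le {a b : ℝ} (ha : 0 < a) (hab : a ≤ b) {t : ℤ → ℝ}
    (ht : ∀ j, 0 < t j) (hstep : ∀ j, t j * t (j + 1) ≤ (a + b) * t j - a * b) (j : ℤ) :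
    t j ∈ Set.Icc a b := by
  have hlt_sum : ∀ j, t j < a + b := fun j => by
    have := hstep (j - 1)
    rw [sub_add_cancel] at this
    nlinarith [ht (j - 1), mul_pos ha (ha.trans_le hab)]
  constructor
  · by_contra! hj
    refine false_of_mul_le_sub_mul_succ hab (s := fun k => a - t (j + k)) (by simpa using hj)
      (fun k => by simpa using ht (j + k)) fun k => ?_
    have := hstep (j + k)
    push_cast
    rw [← add_assoc]
    nlinarith
  · by_contra! hj
    refine false_of_mul_le_sub_mul_succ hab (s := fun k => t (j - k) - b) (by simpa using hj)
      (fun k => by linarith [hlt_sum (j - k)]) fun k => ?_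
    have := hstep (j - (k + 1))
    rw [show j - (k + 1) + 1 = j - k by ring] at this
    push_cast
    nlinarith

theorem stmt13_general {n : ℕ} (hn : 1 ≤ n) (T : ℝ) (hT : 2 * (n : ℝ) ≤ T)
    (d β : ℤ → Matrix (Fin n) (Fin n) ℝ)
    (hd : ∀ j, (d j).PosDef)
    (hrec : ∀ j : ℤ, d (j + 1) = β (j + 1) - (d j)⁻¹)
    (hTr : ∀ j, (β j).trace ≤ T) :
    ∀ j : ℤ, (T - Real.sqrt (T ^ 2 - 4 * (n : ℝ) ^ 2)) / 2 ≤ (d j).trace ∧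
      (d j).trace ≤ (T + Real.sqrt (T ^ 2 - 4 * (n : ℝ) ^ 2)) / 2 := by
  have : NeZero n := ⟨by omega⟩
  have hn' : (1 : ℝ) ≤ n := by exact_mod_cast hn
  set q := Real.sqrt (T ^ 2 - 4 * (n : ℝ) ^ 2)
  have hq : q ^ 2 = T ^ 2 - 4 * (n : ℝ) ^ 2 := Real.sq_sqrt (by nlinarith)
  have hqT : q < T := (Real.sqrt_lt' (by linarith)).2 (by nlinarith)
  refine mem_Icc_of_mul_succ_le (by linarith)
    (by linarith [Real.sqrt_nonneg (T ^ 2 - 4 * (n : ℝ) ^ 2)]) (fun j => (hd j).trace_pos)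
    fun j => ?_
  have hCS := (hd j).card_sq_le_trace_mul_trace_inv
  rw [Fintype.card_fin] at hCS
  rw [hrec, trace_sub]
  nlinarith [hTr (j + 1), (hd j).trace_pos]

/-- Along a bi-infinite sequence of real symmetric positive definite `n×n`
matrices with `d_{j+1} = β_{j+1} − d_j⁻¹` and `Tr(β_j) ≤ T` (where `T ≥ 2n`), every trace
`Tr(d_j)` lies in `[Tr_min, Tr_max]` with `Tr_{min,max} = (T ∓ √(T² − 4n²))/2`. -/
theorem stmt13 {n : ℕ} (hn : 1 ≤ n) (T : ℝ) (hT : 2 * (n : ℝ) ≤ T)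
    (d β : ℤ → Matrix (Fin n) (Fin n) ℝ)
    (hd : ∀ j, (d j).PosDef)
    (hβ : ∀ j, (β j).IsHermitian)
    (hrec : ∀ j : ℤ, d (j + 1) = β (j + 1) - (d j)⁻¹)
    (hTr : ∀ j, (β j).trace ≤ T) :
    ∀ j : ℤ, (T - Real.sqrt (T ^ 2 - 4 * (n : ℝ) ^ 2)) / 2 ≤ (d j).trace ∧
      (d j).trace ≤ (T + Real.sqrt (T ^ 2 - 4 * (n : ℝ) ^ 2)) / 2 :=
  stmt13_general hn T hT d β hd hrec hTr
end

section
/- Let n ≥ 1 and B ≥ 2 be real, and set λ_min = (B − √(B² − 4))/2 and λ_max = (B + √(B² − 4))/2. Suppose (d_j)_{j∈ℤ} is a bi-infinite sequence of real symmetric positive definite n×n matrices and (β_j)_{j∈ℤ} a sequence of real symmetric n×n matrices with d_{j+1} = β_{j+1} − d_j⁻¹ and λ₊(β_j) ≤ B for all j ∈ ℤ. Then λ_min ≤ λ₋(d_j) ≤ λ_max for every j ∈ ℤ. -/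
/-!
In the Loewner order, `λ₋(d_{j+1}) ≤ d_{j+1} = β_{j+1} - d_j⁻¹ ≤ B - d_j⁻¹`, and `d_j⁻¹` has the
eigenvalue `1 / λ₋(d_j)`; so the positive numbers `m_j = λ₋(d_j)` satisfy
`m_{j+1} ≤ B - 1 / m_j`. Their supremum `M` and infimum `μ` over `ℤ` then satisfy
`M ≤ B - 1 / M` and `1 / (B - μ) ≤ μ`, i.e. both solve `x² - B x + 1 ≤ 0`, whose solution set is
`[λ_min, λ_max]`.
-/

open Matrix

noncomputable def maxEig {n : ℕ} {M : Matrix (Fin n) (Fin n) ℝ}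
    (hM : M.IsHermitian) : ℝ :=
  ⨆ i, hM.eigenvalues i

open scoped MatrixOrder

theorem le_and_le_of_sq_sub_mul_add_one_nonpos {B x : ℝ} (h : x ^ 2 - B * x + 1 ≤ 0) :
    (B - √(B ^ 2 - 4)) / 2 ≤ x ∧ x ≤ (B + √(B ^ 2 - 4)) / 2 := by
  have := abs_le.1 (Real.abs_le_sqrt (x := 2 * x - B) (y := B ^ 2 - 4) (by nlinarith))
  constructor <;> linarith

theorem le_and_le_of_le_sub_inv {B : ℝ} {m : ℤ → ℝ} (hpos : ∀ j, 0 < m j)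
    (hstep : ∀ j, m (j + 1) ≤ B - (m j)⁻¹) (j : ℤ) :
    (B - √(B ^ 2 - 4)) / 2 ≤ m j ∧ m j ≤ (B + √(B ^ 2 - 4)) / 2 := by
  have hstep' : ∀ j, m j ≤ B - (m (j - 1))⁻¹ := fun j => by
    simpa only [sub_add_cancel] using hstep (j - 1)
  have hlt : ∀ j, m j < B := fun j => by linarith [hstep' j, inv_pos.2 (hpos (j - 1))]
  have hbddA : BddAbove (Set.range m) := ⟨B, Set.forall_mem_range.2 fun j => (hlt j).le⟩
  have hbddB : BddBelow (Set.range m) := ⟨0, Set.forall_mem_range.2 fun j => (hpos j).le⟩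
  set M := ⨆ j, m j
  set μ := ⨅ j, m j
  have hM : 0 < M := (hpos 0).trans_le (le_ciSup hbddA 0)
  have hμ : 0 < B - μ := by linarith [ciInf_le hbddB 0, hlt 0]
  have hM_le : M ≤ B - M⁻¹ := ciSup_le fun j => by
    linarith [hstep' j, inv_anti₀ (hpos (j - 1)) (le_ciSup hbddA (j - 1))]
  have hμ_ge : (B - μ)⁻¹ ≤ μ := le_ciInf fun j => by
    have h : (m j)⁻¹ ≤ B - μ := by linarith [hstep j, ciInf_le hbddB (j + 1)]
    simpa using inv_anti₀ (inv_pos.2 (hpos j)) h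
  have hupper := le_and_le_of_sq_sub_mul_add_one_nonpos (B := B) (x := M) (by
    have := mul_le_mul_of_nonneg_left hM_le hM.le
    rw [mul_sub, mul_inv_cancel₀ hM.ne'] at this
    nlinarith)
  have hlower := le_and_le_of_sq_sub_mul_add_one_nonpos (B := B) (x := μ) (by
    have := mul_le_mul_of_nonneg_right hμ_ge hμ.le
    rw [inv_mul_cancel₀ hμ.ne'] at this
    nlinarith)
  exact ⟨hlower.1.trans (ciInf_le hbddB j), (le_ciSup hbddA j).trans hupper.2⟩

namespace Matrix.IsHermitian

variable {n : ℕ} {M : Matrix (Fin n) (Fin n) ℝ}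

theorem exists_eigenvalues_eq_minEig [NeZero n] (hM : M.IsHermitian) :
    ∃ i, hM.eigenvalues i = minEig hM :=
  exists_eq_ciInf_of_finite

theorem algebraMap_minEig_le (hM : M.IsHermitian) : algebraMap ℝ _ (minEig hM) ≤ M := by
  refine (algebraMap_le_iff_le_spectrum hM.isSelfAdjoint).2 fun x hx => ?_
  obtain ⟨i, rfl⟩ := hM.spectrum_real_eq_range_eigenvalues ▸ hx
  exact ciInf_le (Set.finite_range _).bddBelow i

theorem le_algebraMap_maxEig (hM : M.IsHermitian) : M ≤ algebraMap ℝ _ (maxEig hM) := by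
  refine (le_algebraMap_iff_spectrum_le hM.isSelfAdjoint).2 fun x hx => ?_
  obtain ⟨i, rfl⟩ := hM.spectrum_real_eq_range_eigenvalues ▸ hx
  exact le_ciSup (Set.finite_range _).bddAbove i

end Matrix.IsHermitian

namespace Matrix.PosDef

variable {n : ℕ} {d : Matrix (Fin n) (Fin n) ℝ}

theorem minEig_pos [NeZero n] (hd : d.PosDef) : 0 < minEig hd.1 := by
  obtain ⟨i, hi⟩ := hd.1.exists_eigenvalues_eq_minEig
  exact hi ▸ hd.eigenvalues_pos i

theorem inv_minEig_mem_spectrum_inv [NeZero n] (hd : d.PosDef) :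
    (minEig hd.1)⁻¹ ∈ spectrum ℝ d⁻¹ := by
  obtain ⟨i, hi⟩ := hd.1.exists_eigenvalues_eq_minEig
  have hmem : minEig hd.1 ∈ spectrum ℝ (hd.isUnit.unit : Matrix (Fin n) (Fin n) ℝ) :=
    hd.1.spectrum_real_eq_range_eigenvalues ▸ ⟨i, hi⟩
  simpa [coe_units_inv] using spectrum.inv₀_mem_inv hmem

theorem minEig_le_maxEig_sub_inv_minEig [NeZero n] {d' β : Matrix (Fin n) (Fin n) ℝ}
    (hd : d.PosDef) (hd' : d'.PosDef) (hβ : β.IsHermitian) (hrec : d' = β - d⁻¹) :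
    minEig hd'.1 ≤ maxEig hβ - (minEig hd.1)⁻¹ := by
  subst hrec
  have hinv : d⁻¹ ≤ algebraMap ℝ _ (maxEig hβ - minEig hd'.1) := by
    rw [map_sub]
    exact (le_sub_comm.1 hd'.1.algebraMap_minEig_le).trans
      (sub_le_sub_right hβ.le_algebraMap_maxEig _)
  have := (le_algebraMap_iff_spectrum_le hd.1.inv.isSelfAdjoint).1 hinv _
    hd.inv_minEig_mem_spectrum_inv
  linarith

end Matrix.PosDef

theorem stmt14_general {n : ℕ} (hn : 1 ≤ n) (B : ℝ)
    (d β : ℤ → Matrix (Fin n) (Fin n) ℝ)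
    (hd : ∀ j, (d j).PosDef)
    (hβ : ∀ j, (β j).IsHermitian)
    (hrec : ∀ j : ℤ, d (j + 1) = β (j + 1) - (d j)⁻¹)
    (hmax : ∀ j, maxEig (hβ j) ≤ B) :
    ∀ j : ℤ, (B - Real.sqrt (B ^ 2 - 4)) / 2 ≤ minEig (hd j).1 ∧
      minEig (hd j).1 ≤ (B + Real.sqrt (B ^ 2 - 4)) / 2 := by
  have : NeZero n := ⟨by omega⟩
  refine le_and_le_of_le_sub_inv (fun j => (hd j).minEig_pos) fun j => ?_
  linarith [(hd j).minEig_le_maxEig_sub_inv_minEig (hd (j + 1)) (hβ (j + 1)) (hrec j),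
    hmax (j + 1)]

/-- Along a bi-infinite sequence of real symmetric positive definite `n×n`
matrices with `d_{j+1} = β_{j+1} − d_j⁻¹` and `λ₊(β_j) ≤ B` (where `B ≥ 2`), every least
eigenvalue `λ₋(d_j)` lies in `[λ_min, λ_max]` with `λ_{min,max} = (B ∓ √(B² − 4))/2`. -/
theorem stmt14 {n : ℕ} (hn : 1 ≤ n) (B : ℝ) (hB : 2 ≤ B)
    (d β : ℤ → Matrix (Fin n) (Fin n) ℝ)
    (hd : ∀ j, (d j).PosDef)
    (hβ : ∀ j, (β j).IsHermitian)
    (hrec : ∀ j : ℤ, d (j + 1) = β (j + 1) - (d j)⁻¹)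
    (hmax : ∀ j, maxEig (hβ j) ≤ B) :
    ∀ j : ℤ, (B - Real.sqrt (B ^ 2 - 4)) / 2 ≤ minEig (hd j).1 ∧
      minEig (hd j).1 ≤ (B + Real.sqrt (B ^ 2 - 4)) / 2 :=
  stmt14_general hn B d β hd hβ hrec hmax
end
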